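/- For the function f : [0,1] × [0,1] → ℝ, f(a,p) = −(1−p)·a² − p·(a−1)², the order of optimization matters: sup_{p ∈ [0,1]} inf_{a ∈ [0,1]} f(a,p) = −1/2, which is strictly smaller than inf_{a ∈ [0,1]} sup_{p ∈ [0,1]} f(a,p) = −1/4; in particular infimum and supremum cannot be interchanged. -/
import Mathlib

open Set

private lemma inner_inf (p : ℝ) (hp : p ∈ Icc (0:ℝ) 1) :
    sInf ((fun a : ℝ => -(1 - p) * a ^ 2 - p * (a - 1) ^ 2) '' Icc (0:ℝ) 1)
      = -max p (1 - p) := by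
  have hlb : ∀ x ∈ (fun a : ℝ => -(1 - p) * a ^ 2 - p * (a - 1) ^ 2) '' Icc (0:ℝ) 1,
      -max p (1 - p) ≤ x := by
    rintro _ ⟨a, ha, rfl⟩
    dsimp only
    rcases max_cases p (1 - p) with ⟨h, h'⟩ | ⟨h, h'⟩ <;> rw [h] <;>
      nlinarith [mul_nonneg ha.1 (sub_nonneg.2 ha.2), sq_nonneg a, sq_nonneg (a - 1),
        mul_nonneg hp.1 (mul_nonneg ha.1 (sub_nonneg.2 ha.2)),
        mul_nonneg (sub_nonneg.2 hp.2) (mul_nonneg ha.1 (sub_nonneg.2 ha.2))]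
  apply le_antisymm
  · rcases le_total p (1 - p) with h | h
    · have hm : (1:ℝ) ∈ Icc (0:ℝ) 1 := by constructor <;> norm_num
      have := csInf_le ⟨-max p (1 - p), hlb⟩ (mem_image_of_mem _ hm)
      simp only [max_eq_right h] at this ⊢
      calc sInf _ ≤ _ := this
        _ = -(1 - p) := by ring
    · have hm : (0:ℝ) ∈ Icc (0:ℝ) 1 := by constructor <;> norm_num
      have := csInf_le ⟨-max p (1 - p), hlb⟩ (mem_image_of_mem _ hm)
      simp only [max_eq_left h] at this ⊢
      calc sInf _ ≤ _ := this
        _ = -p := by ring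
  · exact le_csInf (⟨_, mem_image_of_mem _ (by constructor <;> norm_num : (0:ℝ) ∈ Icc (0:ℝ) 1)⟩) hlb

private lemma inner_sup (a : ℝ) (_ha : a ∈ Icc (0:ℝ) 1) :
    sSup ((fun p : ℝ => -(1 - p) * a ^ 2 - p * (a - 1) ^ 2) '' Icc (0:ℝ) 1)
      = -min (a ^ 2) ((a - 1) ^ 2) := by
  have hub : ∀ x ∈ (fun p : ℝ => -(1 - p) * a ^ 2 - p * (a - 1) ^ 2) '' Icc (0:ℝ) 1,
      x ≤ -min (a ^ 2) ((a - 1) ^ 2) := by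
    rintro _ ⟨p, hp, rfl⟩
    dsimp only
    rcases min_cases (a ^ 2) ((a - 1) ^ 2) with ⟨h, h'⟩ | ⟨h, h'⟩ <;> rw [h]
    · nlinarith [mul_nonneg hp.1 (sub_nonneg.2 h')]
    · nlinarith [mul_nonneg (sub_nonneg.2 hp.2) (sub_nonneg.2 h'.le)]
  apply le_antisymm
  · exact csSup_le (⟨_, mem_image_of_mem _ (by constructor <;> norm_num : (0:ℝ) ∈ Icc (0:ℝ) 1)⟩) hub
  · rcases le_total (a ^ 2) ((a - 1) ^ 2) with h | h
    · have hm : (0:ℝ) ∈ Icc (0:ℝ) 1 := by constructor <;> norm_num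
      have := le_csSup ⟨_, hub⟩ (mem_image_of_mem (fun p : ℝ => -(1 - p) * a ^ 2 - p * (a - 1) ^ 2) hm)
      simp only [min_eq_left h]
      calc -a ^ 2 = -(1 - 0) * a ^ 2 - 0 * (a - 1) ^ 2 := by ring
        _ ≤ _ := this
    · have hm : (1:ℝ) ∈ Icc (0:ℝ) 1 := by constructor <;> norm_num
      have := le_csSup ⟨_, hub⟩ (mem_image_of_mem (fun p : ℝ => -(1 - p) * a ^ 2 - p * (a - 1) ^ 2) hm)
      simp only [min_eq_right h]
      calc -(a - 1) ^ 2 = -(1 - 1) * a ^ 2 - 1 * (a - 1) ^ 2 := by ring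
        _ ≤ _ := this

/-- For `f : [0,1] × [0,1] → ℝ`, `f(a,p) = −(1−p)·a² − p·(a−1)²`, the order
of optimization matters: `sup_{p ∈ [0,1]} inf_{a ∈ [0,1]} f(a,p) = −1/2`, which is strictly
smaller than `inf_{a ∈ [0,1]} sup_{p ∈ [0,1]} f(a,p) = −1/4`; in particular infimum and
supremum cannot be interchanged. -/
theorem counterexample_sup_inf_lt_inf_sup :
    sSup ((fun p : ℝ =>
        sInf ((fun a : ℝ => -(1 - p) * a ^ 2 - p * (a - 1) ^ 2) '' Set.Icc (0 : ℝ) 1)) ''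
      Set.Icc (0 : ℝ) 1) = -(1 / 2) ∧
    sInf ((fun a : ℝ =>
        sSup ((fun p : ℝ => -(1 - p) * a ^ 2 - p * (a - 1) ^ 2) '' Set.Icc (0 : ℝ) 1)) ''
      Set.Icc (0 : ℝ) 1) = -(1 / 4) ∧
    sSup ((fun p : ℝ =>
        sInf ((fun a : ℝ => -(1 - p) * a ^ 2 - p * (a - 1) ^ 2) '' Set.Icc (0 : ℝ) 1)) ''
      Set.Icc (0 : ℝ) 1) <
    sInf ((fun a : ℝ =>
        sSup ((fun p : ℝ => -(1 - p) * a ^ 2 - p * (a - 1) ^ 2) '' Set.Icc (0 : ℝ) 1)) ''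
      Set.Icc (0 : ℝ) 1) := by
  have h1 : ((fun p : ℝ =>
        sInf ((fun a : ℝ => -(1 - p) * a ^ 2 - p * (a - 1) ^ 2) '' Set.Icc (0 : ℝ) 1)) ''
      Set.Icc (0 : ℝ) 1) = (fun p : ℝ => -max p (1 - p)) '' Icc (0:ℝ) 1 :=
    image_congr inner_inf
  have h2 : ((fun a : ℝ =>
        sSup ((fun p : ℝ => -(1 - p) * a ^ 2 - p * (a - 1) ^ 2) '' Set.Icc (0 : ℝ) 1)) ''
      Set.Icc (0 : ℝ) 1) = (fun a : ℝ => -min (a ^ 2) ((a - 1) ^ 2)) '' Icc (0:ℝ) 1 :=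
    image_congr inner_sup
  have hS : sSup ((fun p : ℝ => -max p (1 - p)) '' Icc (0:ℝ) 1) = -(1 / 2) := by
    have hub : ∀ x ∈ (fun p : ℝ => -max p (1 - p)) '' Icc (0:ℝ) 1, x ≤ -(1/2 : ℝ) := by
      rintro _ ⟨p, hp, rfl⟩
      dsimp only
      rcases max_cases p (1 - p) with ⟨h, h'⟩ | ⟨h, h'⟩ <;> rw [h] <;> linarith
    apply le_antisymm
    · exact csSup_le (⟨_, mem_image_of_mem _ (by constructor <;> norm_num : (0:ℝ) ∈ Icc (0:ℝ) 1)⟩) hub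
    · have hm : (1/2 : ℝ) ∈ Icc (0:ℝ) 1 := by constructor <;> norm_num
      have := le_csSup ⟨_, hub⟩ (mem_image_of_mem (fun p : ℝ => -max p (1 - p)) hm)
      calc -(1/2 : ℝ) = -max (1/2 : ℝ) (1 - 1/2) := by norm_num
        _ ≤ _ := this
  have hI : sInf ((fun a : ℝ => -min (a ^ 2) ((a - 1) ^ 2)) '' Icc (0:ℝ) 1) = -(1 / 4) := by
    have hlb : ∀ x ∈ (fun a : ℝ => -min (a ^ 2) ((a - 1) ^ 2)) '' Icc (0:ℝ) 1, -(1/4 : ℝ) ≤ x := by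
      rintro _ ⟨a, ha, rfl⟩
      show -(1/4 : ℝ) ≤ -min (a ^ 2) ((a - 1) ^ 2)
      rcases le_total a (1/2 : ℝ) with h | h
      · have : min (a ^ 2) ((a - 1) ^ 2) ≤ a ^ 2 := min_le_left _ _
        nlinarith [ha.1]
      · have : min (a ^ 2) ((a - 1) ^ 2) ≤ (a - 1) ^ 2 := min_le_right _ _
        nlinarith [ha.2]
    apply le_antisymm
    · have hm : (1/2 : ℝ) ∈ Icc (0:ℝ) 1 := by constructor <;> norm_num
      have := csInf_le ⟨_, hlb⟩ (mem_image_of_mem (fun a : ℝ => -min (a ^ 2) ((a - 1) ^ 2)) hm)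
      calc sInf _ ≤ _ := this
        _ = -(1/4 : ℝ) := by norm_num
    · exact le_csInf (⟨_, mem_image_of_mem _ (by constructor <;> norm_num : (0:ℝ) ∈ Icc (0:ℝ) 1)⟩) hlb
  rw [h1, h2, hS, hI]
  norm_num
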